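/- arXiv:1412.1443 — 5 statements merged into one kernel-verified Lean document; each statement's English description precedes it below -/
import Mathlib

section
/- In the hard-core model with fugacity λ, an estimated graph Ĝ maximizes the likelihood of observed samples σ^{(1)},…,σ^{(n)} if and only if Ĝ contains exactly all pairs {i,j} such that no sample σ^{(k)} has σ^{(k)}_i = σ^{(k)}_j = 1 (among graphs in the admissible class). Equivalently: adding any edge e not contradicted by the samples strictly increases the likelihood, since the partition function Z strictly decreases when an edge is added (assuming removing independence of at least one set). -/
open Classical Finset
noncomputable section

/-- The hard-core partition function of `G` with fugacity `lam`. -/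
def hcZ (p : ℕ) (G : SimpleGraph (Fin p)) (lam : ℝ) : ℝ :=
  ∑ I : Finset (Fin p), if (∀ a ∈ I, ∀ b ∈ I, ¬ G.Adj a b) then lam ^ I.card else 0

/-- The hard-core likelihood of the samples `s` under graph `G`. -/
def hcLikelihood (p n : ℕ) (lam : ℝ) (s : Fin n → Finset (Fin p))
    (G : SimpleGraph (Fin p)) : ℝ :=
  ∏ k, (if (∀ a ∈ s k, ∀ b ∈ s k, ¬ G.Adj a b) then lam ^ (s k).card else 0) / hcZ p G lam

lemma hcZ_pos (p : ℕ) (G : SimpleGraph (Fin p)) {lam : ℝ} (hlam : 0 < lam) :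
    0 < hcZ p G lam := by
  unfold hcZ
  refine Finset.sum_pos' (fun I _ => ?_) ⟨∅, Finset.mem_univ _, ?_⟩
  · split_ifs
    · positivity
    · exact le_refl 0
  · simp

lemma hcZ_term_le {p : ℕ} {lam : ℝ} (hlam : 0 < lam) {G G' : SimpleGraph (Fin p)}
    (h : G ≤ G') (K : Finset (Fin p)) :
    (if (∀ a ∈ K, ∀ b ∈ K, ¬ G'.Adj a b) then lam ^ K.card else 0) ≤
    (if (∀ a ∈ K, ∀ b ∈ K, ¬ G.Adj a b) then lam ^ K.card else 0) := by
  split_ifs with h1 h2 h2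
  · exact le_refl _
  · exact absurd (fun a ha b hb hab => h1 a ha b hb (h hab)) h2
  · positivity
  · exact le_refl _

lemma hcZ_anti {p : ℕ} {G G' : SimpleGraph (Fin p)} (h : G ≤ G') {lam : ℝ} (hlam : 0 < lam) :
    hcZ p G' lam ≤ hcZ p G lam :=
  Finset.sum_le_sum fun K _ => hcZ_term_le hlam h K

lemma hcZ_lt {p : ℕ} {lam : ℝ} (hlam : 0 < lam) (G : SimpleGraph (Fin p)) (i j : Fin p)
    (hij : i ≠ j) (I : Finset (Fin p)) (hI : ∀ a ∈ I, ∀ b ∈ I, ¬ G.Adj a b)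
    (hiI : i ∈ I) (hjI : j ∈ I) :
    hcZ p (G ⊔ SimpleGraph.fromRel (fun a b => a = i ∧ b = j)) lam < hcZ p G lam := by
  unfold hcZ
  apply Finset.sum_lt_sum (fun K _ => hcZ_term_le hlam le_sup_left K)
  refine ⟨I, Finset.mem_univ _, ?_⟩
  have hadj : (G ⊔ SimpleGraph.fromRel fun a b => a = i ∧ b = j).Adj i j := by
    simp [SimpleGraph.fromRel_adj, hij]
  rw [if_neg (fun h => h i hiI j hjI hadj), if_pos hI]
  positivity

lemma hcLikelihood_eq {p n : ℕ} {lam : ℝ} {s : Fin n → Finset (Fin p)}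
    {G : SimpleGraph (Fin p)} (h : ∀ k, ∀ a ∈ s k, ∀ b ∈ s k, ¬ G.Adj a b) :
    hcLikelihood p n lam s G = (∏ k, lam ^ (s k).card) / (hcZ p G lam) ^ n := by
  unfold hcLikelihood
  rw [Finset.prod_div_distrib, Finset.prod_const, Finset.card_univ, Fintype.card_fin]
  congr 1
  exact Finset.prod_congr rfl fun k _ => if_pos (h k)

lemma hcLikelihood_eq_zero {p n : ℕ} {lam : ℝ} {s : Fin n → Finset (Fin p)}
    {G : SimpleGraph (Fin p)} {k : Fin n} (h : ¬ ∀ a ∈ s k, ∀ b ∈ s k, ¬ G.Adj a b) :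
    hcLikelihood p n lam s G = 0 := by
  unfold hcLikelihood
  refine Finset.prod_eq_zero (Finset.mem_univ k) ?_
  rw [if_neg h, zero_div]

lemma le_fromRel {p n : ℕ} {s : Fin n → Finset (Fin p)} {H : SimpleGraph (Fin p)}
    (h : ∀ k, ∀ a ∈ s k, ∀ b ∈ s k, ¬ H.Adj a b) :
    H ≤ SimpleGraph.fromRel (fun i j => ∀ k, ¬ (i ∈ s k ∧ j ∈ s k)) := by
  intro a b hab
  exact ⟨hab.ne, Or.inl fun k hk => h k a hk.1 b hk.2 hab⟩

lemma samples_indep {p n : ℕ} (s : Fin n → Finset (Fin p)) :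
    ∀ k, ∀ a ∈ s k, ∀ b ∈ s k,
      ¬ (SimpleGraph.fromRel (fun i j => ∀ k, ¬ (i ∈ s k ∧ j ∈ s k))).Adj a b := by
  intro k a ha b hb hadj
  rw [SimpleGraph.fromRel_adj] at hadj
  rcases hadj.2 with h | h
  · exact h k ⟨ha, hb⟩
  · exact h k ⟨hb, ha⟩

/-- Maximum-likelihood characterization of `simpleHC`: (a) adding to `G` an edge `{i,j}`
between non-adjacent vertices that both lie in some independent set of `G` strictly
decreases the partition function; (b) a graph maximizes the likelihood of the samples iff
its edges are exactly the pairs never jointly present in a sample. -/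
theorem simpleHC_is_ML (p n : ℕ) (lam : ℝ) (hlam : 0 < lam) (hn : 1 ≤ n)
    (s : Fin n → Finset (Fin p)) :
    (∀ (G : SimpleGraph (Fin p)) (i j : Fin p), i ≠ j → ¬ G.Adj i j →
      (∃ I : Finset (Fin p), (∀ a ∈ I, ∀ b ∈ I, ¬ G.Adj a b) ∧ i ∈ I ∧ j ∈ I) →
      hcZ p (G ⊔ SimpleGraph.fromRel (fun a b => a = i ∧ b = j)) lam < hcZ p G lam) ∧
    (∀ H : SimpleGraph (Fin p),
      (∀ H' : SimpleGraph (Fin p), hcLikelihood p n lam s H' ≤ hcLikelihood p n lam s H) ↔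
      H = SimpleGraph.fromRel (fun i j => ∀ k, ¬ (i ∈ s k ∧ j ∈ s k))) := by
  set Ghat := SimpleGraph.fromRel (fun i j => ∀ k, ¬ (i ∈ s k ∧ j ∈ s k)) with hGhat
  have hindep := samples_indep s
  have hnum_pos : 0 < ∏ k : Fin n, lam ^ (s k).card := by positivity
  have hLhat_pos : 0 < hcLikelihood p n lam s Ghat := by
    rw [hcLikelihood_eq hindep]
    exact div_pos hnum_pos (pow_pos (hcZ_pos p _ hlam) n)
  constructor
  · rintro G i j hij _ ⟨I, hI, hiI, hjI⟩
    exact hcZ_lt hlam G i j hij I hI hiI hjI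
  · intro H
    constructor
    · intro hmax
      have hLH_pos : 0 < hcLikelihood p n lam s H := lt_of_lt_of_le hLhat_pos (hmax Ghat)
      have hHindep : ∀ k, ∀ a ∈ s k, ∀ b ∈ s k, ¬ H.Adj a b := by
        intro k
        by_contra hk
        rw [hcLikelihood_eq_zero hk] at hLH_pos
        exact lt_irrefl 0 hLH_pos
      have hle : H ≤ Ghat := le_fromRel hHindep
      by_contra hne
      obtain ⟨i, j, hGadj, hHnadj⟩ : ∃ i j, Ghat.Adj i j ∧ ¬ H.Adj i j := by
        by_contra hc
        push_neg at hc
        exact hne (le_antisymm hle fun a b hab => hc a b hab)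
      have hij : i ≠ j := hGadj.ne
      set H' := H ⊔ SimpleGraph.fromRel (fun a b => a = i ∧ b = j) with hH'
      have hIindep : ∀ a ∈ ({i, j} : Finset (Fin p)), ∀ b ∈ ({i, j} : Finset (Fin p)),
          ¬ H.Adj a b := by
        intro a ha b hb hab
        simp only [Finset.mem_insert, Finset.mem_singleton] at ha hb
        rcases ha with rfl | rfl <;> rcases hb with rfl | rfl
        · exact H.irrefl hab
        · exact hHnadj hab
        · exact hHnadj hab.symm
        · exact H.irrefl hab
      have hZlt : hcZ p H' lam < hcZ p H lam :=
        hcZ_lt hlam H i j hij {i, j} hIindep (by simp) (by simp)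
      have hH'le : H' ≤ Ghat := by
        refine sup_le hle ?_
        intro a b hab
        rcases hab with ⟨hne', h | h⟩
        · obtain ⟨rfl, rfl⟩ := h; exact hGadj
        · obtain ⟨rfl, rfl⟩ := h; exact hGadj.symm
      have hH'indep : ∀ k, ∀ a ∈ s k, ∀ b ∈ s k, ¬ H'.Adj a b :=
        fun k a ha b hb hab => hindep k a ha b hb (hH'le hab)
      have : hcLikelihood p n lam s H < hcLikelihood p n lam s H' := by
        rw [hcLikelihood_eq hHindep, hcLikelihood_eq hH'indep]
        apply div_lt_div_of_pos_left hnum_pos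
        · exact pow_pos (hcZ_pos p _ hlam) n
        · exact pow_lt_pow_left₀ hZlt (le_of_lt (hcZ_pos p _ hlam)) (by omega)
      exact absurd (hmax H') (not_le.mpr this)
    · rintro rfl
      intro H'
      by_cases hall : ∀ k, ∀ a ∈ s k, ∀ b ∈ s k, ¬ H'.Adj a b
      · have hle : H' ≤ Ghat := le_fromRel hall
        rw [hcLikelihood_eq hall, hcLikelihood_eq hindep]
        apply div_le_div_of_nonneg_left (le_of_lt hnum_pos) (pow_pos (hcZ_pos p _ hlam) n)
        exact pow_le_pow_left₀ (le_of_lt (hcZ_pos p _ hlam)) (hcZ_anti hle hlam) n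
      · push_neg at hall
        obtain ⟨k, hk⟩ := hall
        rw [hcLikelihood_eq_zero (by push_neg; exact hk)]
        exact le_of_lt hLhat_pos
end
end

section
/- In the antiferromagnetic Ising model P(σ) ∝ exp(−β Σ_{(i,j)∈E} σ_i σ_j + Σ_i h_i σ_i) on {0,1}^p with |h_i| ≤ h, if vertices a and b are NOT adjacent, then P(σ_a = 1 | σ_b = 1) ≥ 1/(1 + 2^{deg(a)} e^{h(deg(a)+1)}). -/
open Classical Finset
noncomputable section

/-- `0/1` spin value as a real number. -/
def bval (x : Bool) : ℝ := if x then 1 else 0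

/-- Hamiltonian of the antiferromagnetic Ising model on `{0,1}` configurations:
`H(σ) = -β Σ_{{i,j}∈E} σ_i σ_j + Σ_i h_i σ_i` (each edge counted once). -/
def isingH {V : Type*} [Fintype V] (G : SimpleGraph V) (beta : ℝ) (hv : V → ℝ)
    (sig : V → Bool) : ℝ :=
  -beta * ((∑ i, ∑ j, if G.Adj i j then bval (sig i) * bval (sig j) else 0) / 2) +
    ∑ i, hv i * bval (sig i)

lemma bval_nonneg (x : Bool) : 0 ≤ bval x := by
  unfold bval; split <;> norm_num

/-- Comparison of Hamiltonians: if every edge interaction decreases and the total field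
changes by at most `c`, the Hamiltonian increases by at most `c`. -/
lemma isingH_mono {p : ℕ} (G : SimpleGraph (Fin p)) {beta c : ℝ} (hbeta : 0 ≤ beta)
    (hv : Fin p → ℝ) (σ τ : Fin p → Bool)
    (hE : ∀ i j, G.Adj i j → bval (τ i) * bval (τ j) ≤ bval (σ i) * bval (σ j))
    (hF : (∑ i, hv i * bval (σ i)) - (∑ i, hv i * bval (τ i)) ≤ c) :
    isingH G beta hv σ ≤ c + isingH G beta hv τ := by
  unfold isingH
  have hEs : (∑ i, ∑ j, if G.Adj i j then bval (τ i) * bval (τ j) else 0)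
      ≤ ∑ i, ∑ j, if G.Adj i j then bval (σ i) * bval (σ j) else 0 := by
    apply Finset.sum_le_sum; intro i _
    apply Finset.sum_le_sum; intro j _
    by_cases hij : G.Adj i j
    · rw [if_pos hij, if_pos hij]; exact hE i j hij
    · rw [if_neg hij, if_neg hij]
  nlinarith [mul_le_mul_of_nonneg_left hEs hbeta, hF]

/-- In the antiferromagnetic Ising model with fields bounded by `h`, if `a` and `b` are
not adjacent then `P(σ_a = 1 | σ_b = 1) ≥ 1/(1 + 2^(deg a) e^(h(deg a + 1)))`. -/
theorem ising_nonedge_cond_lower (p : ℕ) (G : SimpleGraph (Fin p)) [DecidableRel G.Adj]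
    (beta h : ℝ) (hbeta : 0 < beta) (hv : Fin p → ℝ) (hh : ∀ i, |hv i| ≤ h)
    (a b : Fin p) (hab : a ≠ b) (hnadj : ¬ G.Adj a b) :
    (∑ sig : Fin p → Bool,
        if sig a = true ∧ sig b = true then Real.exp (isingH G beta hv sig) else 0) /
      (∑ sig : Fin p → Bool, if sig b = true then Real.exp (isingH G beta hv sig) else 0)
      ≥ 1 / (1 + 2 ^ G.degree a * Real.exp (h * (G.degree a + 1))) := by
  classical
  set d := G.degree a with hd
  set C : ℝ := 2 ^ d * Real.exp (h * (d + 1)) with hC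
  have hh0 : 0 ≤ h := le_trans (abs_nonneg _) (hh a)
  have hC0 : 0 < C := by positivity
  set f : (Fin p → Bool) → ℝ := fun σ => Real.exp (isingH G beta hv σ) with hf
  have hf0 : ∀ σ, 0 < f σ := fun σ => Real.exp_pos _
  -- the flip map
  set Φ : (Fin p → Bool) → (Fin p → Bool) :=
    fun σ i => if i = a then true else if G.Adj a i then false else σ i with hΦ
  -- key sets
  set S1 : Finset (Fin p → Bool) := univ.filter (fun σ => σ a = true ∧ σ b = true) with hS1
  set S0 : Finset (Fin p → Bool) := univ.filter (fun σ => ¬ σ a = true ∧ σ b = true) with hS0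
  set Sb : Finset (Fin p → Bool) := univ.filter (fun σ => σ b = true) with hSb
  have hN : (∑ sig : Fin p → Bool,
      if sig a = true ∧ sig b = true then Real.exp (isingH G beta hv sig) else 0)
      = ∑ σ ∈ S1, f σ := by rw [Finset.sum_filter]
  have hD : (∑ sig : Fin p → Bool, if sig b = true then Real.exp (isingH G beta hv sig) else 0)
      = ∑ σ ∈ Sb, f σ := by rw [Finset.sum_filter]
  have hsplit : ∑ σ ∈ Sb, f σ = ∑ σ ∈ S1, f σ + ∑ σ ∈ S0, f σ := by
    rw [← Finset.sum_filter_add_sum_filter_not Sb (fun σ => σ a = true) f]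
    congr 1 <;> · congr 1; simp [hSb, hS1, hS0, Finset.filter_filter, and_comm]
  -- Φ maps S0 into S1
  have hΦmem : ∀ σ ∈ S0, Φ σ ∈ S1 := by
    intro σ hσ
    simp only [hS0, Finset.mem_filter, Finset.mem_univ, true_and] at hσ
    simp only [hS1, Finset.mem_filter, Finset.mem_univ, true_and]
    refine ⟨by simp [hΦ], ?_⟩
    simp only [hΦ]
    rw [if_neg (Ne.symm hab), if_neg hnadj]
    exact hσ.2
  -- energy inequality
  have hkey : ∀ σ ∈ S0, f σ ≤ Real.exp (h * (d + 1)) * f (Φ σ) := by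
    intro σ hσ
    simp only [hS0, Finset.mem_filter, Finset.mem_univ, true_and, Bool.not_eq_true] at hσ
    rw [hf, ← Real.exp_add]
    apply Real.exp_le_exp.mpr
    apply isingH_mono G hbeta.le hv σ (Φ σ)
    · intro i j hij
      by_cases hia : i = a
      · have hz : Φ σ j = false := by
          simp only [hΦ]
          rw [if_neg (G.ne_of_adj (hia ▸ hij)).symm, if_pos (hia ▸ hij)]
        rw [hz]; simpa [bval] using mul_nonneg (bval_nonneg (σ i)) (bval_nonneg (σ j))
      · by_cases hja : j = a
        · have hz : Φ σ i = false := by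
            simp only [hΦ]
            rw [if_neg hia, if_pos (hja ▸ hij.symm)]
          rw [hz]; simpa [bval] using mul_nonneg (bval_nonneg (σ i)) (bval_nonneg (σ j))
        · by_cases hai : G.Adj a i
          · have hz : Φ σ i = false := by simp only [hΦ]; rw [if_neg hia, if_pos hai]
            rw [hz]; simpa [bval] using mul_nonneg (bval_nonneg (σ i)) (bval_nonneg (σ j))
          · by_cases haj : G.Adj a j
            · have hz : Φ σ j = false := by simp only [hΦ]; rw [if_neg hja, if_pos haj]
              rw [hz]; simpa [bval] using mul_nonneg (bval_nonneg (σ i)) (bval_nonneg (σ j))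
            · have h1 : Φ σ i = σ i := by simp only [hΦ]; rw [if_neg hia, if_neg hai]
              have h2 : Φ σ j = σ j := by simp only [hΦ]; rw [if_neg hja, if_neg haj]
              rw [h1, h2]
    · rw [← Finset.sum_sub_distrib]
      have bound : ∀ i : Fin p,
          hv i * bval (σ i) - hv i * bval (Φ σ i)
            ≤ if i = a ∨ G.Adj a i then h else 0 := by
        intro i
        by_cases hia : i = a
        · subst hia
          have h1 : Φ σ i = true := by simp [hΦ]
          rw [h1, hσ.1, if_pos (Or.inl rfl)]
          simp only [bval, if_pos, Bool.false_eq_true, if_false, if_true]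
          have h2 := neg_abs_le (hv i)
          have h3 := hh i
          nlinarith
        · by_cases hai : G.Adj a i
          · have h1 : Φ σ i = false := by simp only [hΦ]; rw [if_neg hia, if_pos hai]
            rw [h1, if_pos (Or.inr hai)]
            simp only [bval, Bool.false_eq_true, if_false]
            have h2 : hv i * (if σ i = true then (1:ℝ) else 0) ≤ |hv i| := by
              split
              · simpa using le_abs_self (hv i)
              · simpa using abs_nonneg (hv i)
            have h3 := hh i
            simp only [mul_zero]
            linarith
          · have h1 : Φ σ i = σ i := by simp only [hΦ]; rw [if_neg hia, if_neg hai]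
            rw [h1, if_neg (by tauto)]
            simp
      calc ∑ i, (hv i * bval (σ i) - hv i * bval (Φ σ i))
          ≤ ∑ i : Fin p, if i = a ∨ G.Adj a i then h else 0 :=
            Finset.sum_le_sum (fun i _ => bound i)
        _ = ((univ.filter (fun i : Fin p => i = a ∨ G.Adj a i)).card : ℝ) * h := by
            rw [← Finset.sum_filter, Finset.sum_const, nsmul_eq_mul]
        _ = h * (d + 1) := by
            have hset : univ.filter (fun i : Fin p => i = a ∨ G.Adj a i)
                = insert a (G.neighborFinset a) := by
              ext i
              simp [SimpleGraph.mem_neighborFinset, eq_comm]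
            rw [hset, Finset.card_insert_of_notMem (by simp), hd,
              SimpleGraph.card_neighborFinset_eq_degree]
            push_cast; ring
  -- fiber cardinality bound
  have hfiber : ∀ τ, ((S0.filter (fun σ => Φ σ = τ)).card : ℝ) ≤ (2 : ℝ) ^ d := by
    intro τ
    have hcard : (S0.filter (fun σ => Φ σ = τ)).card
        ≤ (univ : Finset ({ x // x ∈ G.neighborFinset a } → Bool)).card := by
      apply Finset.card_le_card_of_injOn (fun σ => fun i => σ i.1)
      · intro _ _; exact Finset.mem_univ _
      · intro σ hσ σ' hσ' hres
        simp only [Finset.coe_filter, Set.mem_setOf_eq, hS0, Finset.mem_filter,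
          Finset.mem_univ, true_and, Bool.not_eq_true] at hσ hσ'
        funext i
        by_cases hia : i = a
        · subst hia; rw [hσ.1.1, hσ'.1.1]
        · by_cases hai : G.Adj a i
          · exact congrFun hres ⟨i, (G.mem_neighborFinset a i).mpr hai⟩
          · have e1 : σ i = τ i := by
              rw [← hσ.2]; simp only [hΦ]; rw [if_neg hia, if_neg hai]
            have e2 : σ' i = τ i := by
              rw [← hσ'.2]; simp only [hΦ]; rw [if_neg hia, if_neg hai]
            rw [e1, e2]
    have huniv : (univ : Finset ({ x // x ∈ G.neighborFinset a } → Bool)).card = 2 ^ d := by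
      rw [Finset.card_univ, Fintype.card_fun, Fintype.card_coe, Fintype.card_bool,
        SimpleGraph.card_neighborFinset_eq_degree]
    calc ((S0.filter (fun σ => Φ σ = τ)).card : ℝ)
        ≤ ((2:ℕ) ^ d : ℕ) := by exact_mod_cast huniv ▸ hcard
      _ = (2 : ℝ) ^ d := by push_cast; ring
  -- M ≤ C * N
  have hMN : ∑ σ ∈ S0, f σ ≤ C * ∑ σ ∈ S1, f σ := by
    calc ∑ σ ∈ S0, f σ
        ≤ ∑ σ ∈ S0, Real.exp (h * (d + 1)) * f (Φ σ) := Finset.sum_le_sum hkey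
      _ = Real.exp (h * (d + 1)) * ∑ σ ∈ S0, f (Φ σ) := by rw [Finset.mul_sum]
      _ ≤ Real.exp (h * (d + 1)) * ((2:ℝ) ^ d * ∑ τ ∈ S1, f τ) := by
          apply mul_le_mul_of_nonneg_left _ (Real.exp_nonneg _)
          rw [Finset.sum_comp f Φ]
          calc ∑ τ ∈ S0.image Φ, (S0.filter fun σ => Φ σ = τ).card • f τ
              ≤ ∑ τ ∈ S0.image Φ, (2:ℝ) ^ d * f τ := by
                apply Finset.sum_le_sum; intro τ _
                rw [nsmul_eq_mul]
                exact mul_le_mul_of_nonneg_right (hfiber τ) (hf0 τ).le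
            _ = (2:ℝ) ^ d * ∑ τ ∈ S0.image Φ, f τ := by rw [Finset.mul_sum]
            _ ≤ (2:ℝ) ^ d * ∑ τ ∈ S1, f τ := by
                apply mul_le_mul_of_nonneg_left _ (by positivity)
                apply Finset.sum_le_sum_of_subset_of_nonneg
                · intro τ hτ
                  obtain ⟨σ, hσ, rfl⟩ := Finset.mem_image.mp hτ
                  exact hΦmem σ hσ
                · intro τ _ _; exact (hf0 τ).le
      _ = C * ∑ σ ∈ S1, f σ := by rw [hC]; ring
  -- N > 0
  have hNpos : 0 < ∑ σ ∈ S1, f σ := by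
    apply Finset.sum_pos (fun σ _ => hf0 σ)
    refine ⟨fun _ => true, ?_⟩
    simp [hS1]
  have hS0nn : 0 ≤ ∑ σ ∈ S0, f σ := Finset.sum_nonneg (fun σ _ => (hf0 σ).le)
  rw [hN, hD, hsplit, ge_iff_le,
    div_le_div_iff₀ (by positivity) (by linarith)]
  linarith
end
end

section
/- In the antiferromagnetic Ising model P(σ) ∝ exp(−β Σ_{(i,j)∈E} σ_i σ_j + Σ_i h_i σ_i) on {0,1}^p with |h_i| ≤ h, if vertices a and b ARE adjacent, then P(σ_a = 1 | σ_b = 1) ≤ 1/(1 + e^{β − h}). -/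
/-!
Flipping the spin at `a` from `1` to `0` in a configuration with `σ_a = σ_b = 1` removes the
interaction of at least the edge `ab`, which raises the (antiferromagnetic) energy by at least
`β`, and removes the field term `h_a ≤ h`. So the flipped configuration has at least `e^(β - h)`
times the weight, and this flip is a bijection between `{σ_a = 1, σ_b = 1}` and
`{σ_a = 0, σ_b = 1}`.
-/

open Classical Finset
noncomputable section

lemma bval_mono : Monotone bval := by
  rintro (_ | _) (_ | _) hxy <;> simp_all [bval, Bool.le_iff_imp]

lemma add_le_sum_sum_of_nonneg {V : Type*} [Fintype V] {g : V → V → ℝ}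
    (hg : ∀ i j, 0 ≤ g i j) {a b : V} (hab : a ≠ b) :
    g a b + g b a ≤ ∑ i, ∑ j, g i j :=
  calc g a b + g b a ≤ (∑ j, g a j) + ∑ j, g b j :=
        add_le_add (single_le_sum (fun j _ ↦ hg a j) (mem_univ b))
          (single_le_sum (fun j _ ↦ hg b j) (mem_univ a))
    _ ≤ ∑ i, ∑ j, g i j :=
        add_le_sum (fun i _ ↦ sum_nonneg fun j _ ↦ hg i j) (mem_univ a) (mem_univ b) hab

section Flip

variable {V : Type*} [Fintype V]

/-- The `2` is the edge `ab`, counted in both orientations by the double sum. -/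
lemma interaction_add_two_le (G : SimpleGraph V) {σ τ : V → Bool} (hτσ : ∀ i, τ i ≤ σ i)
    {a b : V} (hadj : G.Adj a b) (hσa : σ a = true) (hσb : σ b = true) (hτa : τ a = false) :
    (∑ i, ∑ j, if G.Adj i j then bval (τ i) * bval (τ j) else 0) + 2 ≤
      ∑ i, ∑ j, if G.Adj i j then bval (σ i) * bval (σ j) else 0 := by
  have hdrop : ∀ i j, 0 ≤ (if G.Adj i j then bval (σ i) * bval (σ j) else 0) -
      (if G.Adj i j then bval (τ i) * bval (τ j) else 0) := by
    intro i j
    split_ifs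
    · exact sub_nonneg.2 (mul_le_mul (bval_mono (hτσ i)) (bval_mono (hτσ j))
        (bval_nonneg _) (bval_nonneg _))
    · simp
  have hedge := add_le_sum_sum_of_nonneg hdrop (G.ne_of_adj hadj)
  have h1 : bval true = 1 := if_pos rfl
  have h0 : bval false = 0 := if_neg Bool.false_ne_true
  simp only [sum_sub_distrib, if_pos hadj, if_pos hadj.symm, hσa, hσb, hτa, h1, h0] at hedge
  linarith

variable [DecidableEq V]

lemma isingH_add_le_isingH_update (G : SimpleGraph V) {beta h : ℝ} (hbeta : 0 ≤ beta)
    {hv : V → ℝ} (hh : ∀ i, |hv i| ≤ h) {a b : V} (hadj : G.Adj a b) {σ : V → Bool}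
    (hσa : σ a = true) (hσb : σ b = true) :
    isingH G beta hv σ + (beta - h) ≤ isingH G beta hv (Function.update σ a false) := by
  set τ := Function.update σ a false
  have hτσ : ∀ i, τ i ≤ σ i := by
    intro i
    rcases eq_or_ne i a with rfl | hi
    · simp [τ]
    · simp [τ, hi]
  have hedges := interaction_add_two_le G hτσ hadj hσa hσb (Function.update_self a false σ)
  have hfield : (∑ i, hv i * bval (σ i)) - ∑ i, hv i * bval (τ i) = hv a := by
    rw [← sum_sub_distrib, Fintype.sum_eq_single a]
    · simp [τ, hσa, bval]
    · intro i hi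
      simp [τ, hi]
  have hha : hv a ≤ h := (abs_le.1 (hh a)).2
  unfold isingH
  nlinarith

lemma sum_ite_eq_add_sum_ite (a b : V) (f : (V → Bool) → ℝ) :
    (∑ σ : V → Bool, if σ b = true then f σ else 0) =
      (∑ σ : V → Bool, if σ a = true ∧ σ b = true then f σ else 0) +
        ∑ σ : V → Bool, if σ a = false ∧ σ b = true then f σ else 0 := by
  rw [← sum_add_distrib]
  refine sum_congr rfl fun σ _ ↦ ?_
  cases σ a <;> cases σ b <;> simp

lemma sum_ite_false_eq_sum_ite_update {a b : V} (hab : a ≠ b) (f : (V → Bool) → ℝ) :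
    (∑ σ : V → Bool, if σ a = false ∧ σ b = true then f σ else 0) =
      ∑ σ : V → Bool, if σ a = true ∧ σ b = true then f (Function.update σ a false) else 0 := by
  have hflip : Function.Involutive fun σ : V → Bool ↦ Function.update σ a (!σ a) := by
    intro σ
    simp
  rw [← hflip.bijective.sum_comp]
  refine sum_congr rfl fun σ _ ↦ ?_
  cases σ a <;> simp [Function.update_of_ne hab.symm]

end Flip

lemma div_add_le_one_div_one_add {N M E : ℝ} (hN : 0 ≤ N) (hE : 0 ≤ E) (hEN : E * N ≤ M) :
    N / (N + M) ≤ 1 / (1 + E) := by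
  rcases hN.eq_or_lt with rfl | hN
  · simp only [zero_div, one_div]
    positivity
  rw [div_le_div_iff₀ (by nlinarith) (by linarith)]
  linarith

theorem ising_edge_cond_upper_general (p : ℕ) (G : SimpleGraph (Fin p))
    (beta h : ℝ) (hbeta : 0 < beta) (hv : Fin p → ℝ) (hh : ∀ i, |hv i| ≤ h)
    (a b : Fin p) (hadj : G.Adj a b) :
    (∑ sig : Fin p → Bool,
        if sig a = true ∧ sig b = true then Real.exp (isingH G beta hv sig) else 0) /
      (∑ sig : Fin p → Bool, if sig b = true then Real.exp (isingH G beta hv sig) else 0)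
      ≤ 1 / (1 + Real.exp (beta - h)) := by
  rw [sum_ite_eq_add_sum_ite a, sum_ite_false_eq_sum_ite_update (G.ne_of_adj hadj)]
  refine div_add_le_one_div_one_add (sum_nonneg fun σ _ ↦ ?_) (Real.exp_pos _).le ?_
  · split_ifs <;> positivity
  rw [mul_sum]
  refine sum_le_sum fun σ _ ↦ ?_
  split_ifs with hσ
  · rw [← Real.exp_add, Real.exp_le_exp, add_comm]
    exact isingH_add_le_isingH_update G hbeta.le hh hadj hσ.1 hσ.2
  · simp

/-- In the antiferromagnetic Ising model with fields bounded by `h`, if `a` and `b` are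
adjacent then `P(σ_a = 1 | σ_b = 1) ≤ 1/(1 + e^(β - h))`. -/
theorem ising_edge_cond_upper (p : ℕ) (G : SimpleGraph (Fin p)) [DecidableRel G.Adj]
    (beta h : ℝ) (hbeta : 0 < beta) (hv : Fin p → ℝ) (hh : ∀ i, |hv i| ≤ h)
    (a b : Fin p) (hadj : G.Adj a b) :
    (∑ sig : Fin p → Bool,
        if sig a = true ∧ sig b = true then Real.exp (isingH G beta hv sig) else 0) /
      (∑ sig : Fin p → Bool, if sig b = true then Real.exp (isingH G beta hv sig) else 0)
      ≤ 1 / (1 + Real.exp (beta - h)) :=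
  ising_edge_cond_upper_general p G beta h hbeta hv hh a b hadj
end
end

section
/- In the antiferromagnetic Ising model on {0,1}^p with |h_i| ≤ h, for any vertex b, P(σ_b = 1) ≥ 1/(1 + 2^{deg(b)} e^{h(deg(b)+1)}). -/
open Classical Finset
noncomputable section

lemma bval_le_one (x : Bool) : bval x ≤ 1 := by unfold bval; split <;> norm_num

/-- In the antiferromagnetic Ising model with fields bounded by `h`, every vertex `b`
satisfies `P(σ_b = 1) ≥ 1/(1 + 2^(deg b) e^(h(deg b + 1)))`. -/
theorem ising_vertex_prob_lower (p : ℕ) (G : SimpleGraph (Fin p)) [DecidableRel G.Adj]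
    (beta h : ℝ) (hbeta : 0 < beta) (hv : Fin p → ℝ) (hh : ∀ i, |hv i| ≤ h)
    (b : Fin p) :
    (∑ sig : Fin p → Bool, if sig b = true then Real.exp (isingH G beta hv sig) else 0) /
      (∑ sig : Fin p → Bool, Real.exp (isingH G beta hv sig))
      ≥ 1 / (1 + 2 ^ G.degree b * Real.exp (h * (G.degree b + 1))) := by
  classical
  set d : ℕ := G.degree b with hd
  have hh0 : 0 ≤ h := le_trans (abs_nonneg _) (hh b)
  set T : (Fin p → Bool) → (Fin p → Bool) :=
    fun sig i => if i = b then true else if G.Adj b i then false else sig i with hTdef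
  have hTb : ∀ sig, T sig b = true := by intro sig; simp [hTdef]
  set F : (Fin p → Bool) → ℝ := fun τ => Real.exp (isingH G beta hv τ) with hFdef
  -- energy comparison
  have hEnergy : ∀ sig : Fin p → Bool, sig b = false →
      isingH G beta hv sig ≤ h * (d + 1) + isingH G beta hv (T sig) := by
    intro sig hb
    have hQ : (∑ i, ∑ j, if G.Adj i j then bval (T sig i) * bval (T sig j) else 0)
        ≤ ∑ i, ∑ j, if G.Adj i j then bval (sig i) * bval (sig j) else 0 := by
      refine Finset.sum_le_sum fun i _ => Finset.sum_le_sum fun j _ => ?_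
      by_cases hij : G.Adj i j
      · simp only [hij, if_true]
        by_cases hi : i = b
        · have hjb : j ≠ b := by rw [← hi]; exact (G.ne_of_adj hij).symm
          have hadj : G.Adj b j := hi ▸ hij
          have hz : T sig j = false := by simp [hTdef, hjb, hadj]
          rw [hz]
          simpa [bval] using mul_nonneg (bval_nonneg (sig i)) (bval_nonneg (sig j))
        · by_cases hj : j = b
          · have hib : i ≠ b := by rw [← hj]; exact G.ne_of_adj hij
            have hadj : G.Adj b i := hj ▸ hij.symm
            have hz : T sig i = false := by simp [hTdef, hib, hadj]
            rw [hz]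
            simpa [bval] using mul_nonneg (bval_nonneg (sig i)) (bval_nonneg (sig j))
          · have h1 : bval (T sig i) ≤ bval (sig i) := by
              simp only [hTdef, hi, if_false]
              split
              · simpa [bval] using bval_nonneg (sig i)
              · exact le_refl _
            have h2 : bval (T sig j) ≤ bval (sig j) := by
              simp only [hTdef, hj, if_false]
              split
              · simpa [bval] using bval_nonneg (sig j)
              · exact le_refl _
            exact mul_le_mul h1 h2 (bval_nonneg _) (bval_nonneg _)
      · simp [hij]
    have hL : (∑ i, hv i * bval (sig i)) - (∑ i, hv i * bval (T sig i)) ≤ h * (d + 1) := by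
      have hcard : (Finset.filter (fun i => i = b ∨ G.Adj b i) Finset.univ).card = d + 1 := by
        have heq : Finset.filter (fun i => i = b ∨ G.Adj b i) Finset.univ
            = insert b (G.neighborFinset b) := by
          ext i
          simp [SimpleGraph.mem_neighborFinset, eq_comm]
        rw [heq, Finset.card_insert_of_notMem (by simp [SimpleGraph.mem_neighborFinset])]
        simp [hd]
      have hsplit : (∑ i, hv i * bval (sig i)) - (∑ i, hv i * bval (T sig i))
          = ∑ i, (hv i * bval (sig i) - hv i * bval (T sig i)) := by
        rw [Finset.sum_sub_distrib]
      have hrhs : (∑ i, (if i = b ∨ G.Adj b i then h else 0)) = h * (d + 1) := by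
        rw [← Finset.sum_filter, Finset.sum_const, hcard, nsmul_eq_mul]
        push_cast; ring
      rw [hsplit, ← hrhs]
      refine Finset.sum_le_sum fun i _ => ?_
      by_cases hib : i = b
      · have h1 : bval (sig i) = 0 := by simp [bval, hib, hb]
        have h2 : bval (T sig i) = 1 := by simp [bval, hTdef, hib]
        rw [h1, h2, if_pos (Or.inl hib)]
        calc hv i * 0 - hv i * 1 = -hv i := by ring
          _ ≤ |hv i| := neg_le_abs _
          _ ≤ h := hh i
      · by_cases hadj : G.Adj b i
        · have h2 : bval (T sig i) = 0 := by simp [bval, hTdef, hib, hadj]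
          rw [h2]
          rw [if_pos (Or.inr hadj)]
          calc hv i * bval (sig i) - hv i * 0 = hv i * bval (sig i) := by ring
            _ ≤ |hv i * bval (sig i)| := le_abs_self _
            _ = |hv i| * bval (sig i) := by
                rw [abs_mul, abs_of_nonneg (bval_nonneg _)]
            _ ≤ h * 1 := mul_le_mul (hh i) (bval_le_one _) (bval_nonneg _) hh0
            _ = h := mul_one h
        · have h2 : T sig i = sig i := by simp [hTdef, hib, hadj]
          simp [h2, hib, hadj]
    have hQ' : beta * ((∑ i, ∑ j, if G.Adj i j then bval (T sig i) * bval (T sig j) else 0) / 2)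
        ≤ beta * ((∑ i, ∑ j, if G.Adj i j then bval (sig i) * bval (sig j) else 0) / 2) := by
      apply mul_le_mul_of_nonneg_left _ (le_of_lt hbeta)
      linarith
    have hinst : ∀ s : Fin p → Bool, isingH G beta hv s =
        -beta * ((∑ i, ∑ j, if G.Adj i j then bval (s i) * bval (s j) else 0) / 2) +
          ∑ i, hv i * bval (s i) := by
      intro s; unfold isingH; congr!
    rw [hinst sig, hinst (T sig)]
    simp only [neg_mul]
    set Qs := ∑ i, ∑ j, if G.Adj i j then bval (sig i) * bval (sig j) else 0 with hQs
    set Qt := ∑ i, ∑ j, if G.Adj i j then bval (T sig i) * bval (T sig j) else 0 with hQt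
    set Ls := ∑ i, hv i * bval (sig i) with hLs
    set Lt := ∑ i, hv i * bval (T sig i) with hLt
    linarith
  -- exponential comparison
  have hExp : ∀ sig : Fin p → Bool, sig b = false →
      F sig ≤ Real.exp (h * (d + 1)) * F (T sig) := by
    intro sig hb
    rw [hFdef, ← Real.exp_add]
    exact Real.exp_le_exp.2 (hEnergy sig hb)
  set S0 := Finset.filter (fun sig : Fin p → Bool => sig b = false) Finset.univ with hS0
  set S1 := Finset.filter (fun sig : Fin p → Bool => sig b = true) Finset.univ with hS1
  set A := ∑ τ ∈ S1, F τ with hA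
  set B := ∑ σ ∈ S0, F σ with hB
  -- counting: ∑_{σ ∈ S0} F (T σ) ≤ 2^d * A
  have hCount : (∑ σ ∈ S0, F (T σ)) ≤ (2 : ℝ) ^ d * A := by
    set N := G.neighborFinset b with hN
    set Φ : (Fin p → Bool) → ((↥N → Bool) × (Fin p → Bool)) :=
      fun σ => (fun i => σ i.1, T σ) with hΦ
    have hinj : Set.InjOn Φ S0 := by
      intro σ hσ σ' hσ' heq
      have hσb : σ b = false := (Finset.mem_filter.1 hσ).2
      have hσ'b : σ' b = false := (Finset.mem_filter.1 hσ').2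
      have h1 : (fun i : ↥N => σ i.1) = fun i : ↥N => σ' i.1 := congrArg Prod.fst heq
      have h2 : T σ = T σ' := congrArg Prod.snd heq
      funext i
      by_cases hib : i = b
      · rw [hib, hσb, hσ'b]
      · by_cases hadj : G.Adj b i
        · have hiN : i ∈ N := by simp [hN, SimpleGraph.mem_neighborFinset, hadj]
          exact congrFun h1 ⟨i, hiN⟩
        · have := congrFun h2 i
          simpa [hTdef, hib, hadj] using this
    have step1 : (∑ σ ∈ S0, F (T σ)) = ∑ y ∈ S0.image Φ, F y.2 := by
      rw [Finset.sum_image hinj]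
    have step2 : (∑ y ∈ S0.image Φ, F y.2) ≤ ∑ y ∈ (Finset.univ : Finset (↥N → Bool)) ×ˢ S1, F y.2 := by
      apply Finset.sum_le_sum_of_subset_of_nonneg
      · intro y hy
        rcases Finset.mem_image.1 hy with ⟨σ, _, rfl⟩
        refine Finset.mem_product.2 ⟨Finset.mem_univ _, ?_⟩
        simp [hS1, hΦ, hTb]
      · intro y _ _
        exact le_of_lt (Real.exp_pos _)
    have step3 : (∑ y ∈ (Finset.univ : Finset (↥N → Bool)) ×ˢ S1, F y.2)
        = (2 : ℝ) ^ d * A := by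
      rw [Finset.sum_product]
      have hin : ∀ x : ↥N → Bool, (∑ y ∈ S1, F (x, y).2) = A := fun _ => rfl
      rw [Finset.sum_congr rfl fun x _ => hin x, Finset.sum_const, nsmul_eq_mul]
      congr 1
      rw [Finset.card_univ, Fintype.card_fun, Fintype.card_coe, hN,
        SimpleGraph.card_neighborFinset_eq_degree, Fintype.card_bool, ← hd]
      push_cast
      ring
    calc (∑ σ ∈ S0, F (T σ)) = ∑ y ∈ S0.image Φ, F y.2 := step1
      _ ≤ ∑ y ∈ (Finset.univ : Finset (↥N → Bool)) ×ˢ S1, F y.2 := step2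
      _ = (2 : ℝ) ^ d * A := step3
  have hBA : B ≤ Real.exp (h * (d + 1)) * ((2 : ℝ) ^ d * A) := by
    calc B ≤ ∑ σ ∈ S0, Real.exp (h * (d + 1)) * F (T σ) := by
          refine Finset.sum_le_sum fun σ hσ => hExp σ (Finset.mem_filter.1 hσ).2
      _ = Real.exp (h * (d + 1)) * ∑ σ ∈ S0, F (T σ) := by rw [Finset.mul_sum]
      _ ≤ Real.exp (h * (d + 1)) * ((2 : ℝ) ^ d * A) := by
          exact mul_le_mul_of_nonneg_left hCount (le_of_lt (Real.exp_pos _))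
  have hApos : 0 < A := by
    refine Finset.sum_pos (fun τ _ => Real.exp_pos _) ⟨fun _ => true, ?_⟩
    simp [hS1]
  have hnum : (∑ sig : Fin p → Bool, if sig b = true then Real.exp (isingH G beta hv sig)
      else 0) = A := by
    rw [hA, hS1, Finset.sum_filter]
  have hden : (∑ sig : Fin p → Bool, Real.exp (isingH G beta hv sig)) = A + B := by
    rw [hA, hB, hS1, hS0]
    rw [← Finset.sum_filter_add_sum_filter_not Finset.univ (fun sig : Fin p → Bool =>
      sig b = true) F]
    congr 1
    apply Finset.sum_congr _ (fun _ _ => rfl)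
    ext σ
    simp
  rw [hnum, hden]
  have hC : (0 : ℝ) < (2 : ℝ) ^ d * Real.exp (h * (d + 1)) := by positivity
  have hZ : 0 < A + B := by
    have hB0 : 0 ≤ B := Finset.sum_nonneg fun σ _ => le_of_lt (Real.exp_pos _)
    linarith
  rw [ge_iff_le, div_le_div_iff₀ (by linarith) hZ]
  have h2d : (2 : ℝ) ^ G.degree b = (2 : ℝ) ^ d := by rw [hd]
  rw [h2d]
  nlinarith [hBA, hApos, Real.exp_pos (h * (d + 1))]
end
end

section
/- In the antiferromagnetic Ising model with |h_i| ≤ h, for any subset of nodes U = {u_1,…,u_k}, P(σ_U = 0) ≥ (1 + e^h)^{-|U|}. -/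
open Classical Finset
noncomputable section

lemma isingH_update_le {p : ℕ} (G : SimpleGraph (Fin p))
    (beta h : ℝ) (hbeta : 0 < beta) (hv : Fin p → ℝ) (hh : ∀ i, |hv i| ≤ h)
    (u : Fin p) (sig : Fin p → Bool) (hsu : sig u = false) :
    isingH G beta hv (Function.update sig u true) ≤ h + isingH G beta hv sig := by
  unfold isingH
  have hb : ∀ i, bval (sig i) ≤ bval (Function.update sig u true i) := by
    intro i
    by_cases hi : i = u
    · subst hi; simp [Function.update_self, hsu, bval]
    · simp [Function.update_of_ne hi]
  set A := (∑ i, ∑ j, if G.Adj i j then bval (sig i) * bval (sig j) else 0) with hAdef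
  set A' := (∑ i, ∑ j, if G.Adj i j then
      bval (Function.update sig u true i) * bval (Function.update sig u true j) else 0) with hA'def
  set F := ∑ i, hv i * bval (sig i) with hFdef
  set F' := ∑ i, hv i * bval (Function.update sig u true i) with hF'def
  have hS : A ≤ A' := by
    apply Finset.sum_le_sum; intro i _; apply Finset.sum_le_sum; intro j _
    split
    · exact mul_le_mul (hb i) (hb j) (bval_nonneg _) (le_trans (bval_nonneg _) (hb i))
    · exact le_rfl
  have hfield : F' - F = hv u := by
    rw [hFdef, hF'def, ← Finset.sum_sub_distrib, Finset.sum_eq_single u]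
    · simp [Function.update_self, hsu, bval]
    · intro i _ hi; simp [Function.update_of_ne hi]
    · simp
  have hu : hv u ≤ h := (abs_le.mp (hh u)).2
  have h1 : beta * A ≤ beta * A' := mul_le_mul_of_nonneg_left hS hbeta.le
  nlinarith [h1]

lemma ising_step {p : ℕ} (G : SimpleGraph (Fin p)) [DecidableRel G.Adj]
    (beta h : ℝ) (hbeta : 0 < beta) (hv : Fin p → ℝ) (hh : ∀ i, |hv i| ≤ h)
    (U : Finset (Fin p)) (u : Fin p) (hu : u ∉ U) :
    (∑ sig : Fin p → Bool,
        if (∀ v ∈ U, sig v = false) then Real.exp (isingH G beta hv sig) else 0)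
      ≤ (1 + Real.exp h) * ∑ sig : Fin p → Bool,
        if (∀ v ∈ insert u U, sig v = false) then Real.exp (isingH G beta hv sig) else 0 := by
  set f := fun sig : Fin p → Bool => isingH G beta hv sig with hf
  have hA : (∑ sig : Fin p → Bool,
        if (∀ v ∈ insert u U, sig v = false) then Real.exp (f sig) else 0)
      = ∑ sig : Fin p → Bool,
        if ((∀ v ∈ U, sig v = false) ∧ sig u = false) then Real.exp (f sig) else 0 := by
    apply Finset.sum_congr rfl; intro sig _
    congr 1
    simp only [Finset.forall_mem_insert, eq_iff_iff]
    tauto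
  have hsplit : (∑ sig : Fin p → Bool,
        if (∀ v ∈ U, sig v = false) then Real.exp (f sig) else 0)
      = (∑ sig : Fin p → Bool,
          if ((∀ v ∈ U, sig v = false) ∧ sig u = false) then Real.exp (f sig) else 0)
        + ∑ sig : Fin p → Bool,
          if ((∀ v ∈ U, sig v = false) ∧ sig u = true) then Real.exp (f sig) else 0 := by
    rw [← Finset.sum_add_distrib]
    apply Finset.sum_congr rfl; intro sig _
    by_cases h1 : ∀ v ∈ U, sig v = false
    · cases hsu : sig u <;> simp [h1, hsu]
    · simp [h1]
  have hinv : Function.Involutive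
      (fun sig : Fin p → Bool => Function.update sig u (!sig u)) := by
    intro sig; funext i
    by_cases hi : i = u
    · subst hi; simp
    · simp [Function.update_of_ne hi]
  have hB : (∑ sig : Fin p → Bool,
        if ((∀ v ∈ U, sig v = false) ∧ sig u = true) then Real.exp (f sig) else 0)
      ≤ Real.exp h * ∑ sig : Fin p → Bool,
        if ((∀ v ∈ U, sig v = false) ∧ sig u = false) then Real.exp (f sig) else 0 := by
    have hre : (∑ sig : Fin p → Bool,
        if ((∀ v ∈ U, sig v = false) ∧ sig u = true) then Real.exp (f sig) else 0)
        = ∑ sig : Fin p → Bool,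
          if ((∀ v ∈ U, (Function.update sig u (!sig u)) v = false) ∧
              (Function.update sig u (!sig u)) u = true) then
            Real.exp (f (Function.update sig u (!sig u))) else 0 := by
      exact (Fintype.sum_bijective _ hinv.bijective _ _ (fun sig => rfl)).symm
    rw [hre, Finset.mul_sum]
    apply Finset.sum_le_sum
    intro sig _
    cases hsu : sig u
    · simp only [Bool.not_false]
      by_cases h1 : ∀ v ∈ U, sig v = false
      · have h1' : ∀ v ∈ U, Function.update sig u true v = false := by
          intro v hv'
          rw [Function.update_of_ne (by rintro rfl; exact hu hv')]
          exact h1 v hv'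
        rw [if_pos ⟨h1', Function.update_self u true sig⟩, if_pos ⟨h1, trivial⟩]
        have hle : f (Function.update sig u true) ≤ h + f sig :=
          isingH_update_le G beta h hbeta hv hh u sig hsu
        calc Real.exp (f (Function.update sig u true))
            ≤ Real.exp (h + f sig) := Real.exp_le_exp.mpr hle
          _ = Real.exp h * Real.exp (f sig) := Real.exp_add _ _
      · have h1' : ¬ ∀ v ∈ U, Function.update sig u true v = false := by
          intro hcon
          apply h1
          intro v hv'
          have := hcon v hv'
          rwa [Function.update_of_ne (by rintro rfl; exact hu hv')] at this
        rw [if_neg (fun hc => h1' hc.1), if_neg (fun hc => h1 hc.1)]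
        simp
    · simp only [Bool.not_true]
      rw [if_neg (by
        rintro ⟨-, hb2⟩
        rw [Function.update_self] at hb2
        exact Bool.false_ne_true hb2)]
      positivity
  have hApos : 0 ≤ ∑ sig : Fin p → Bool,
      if ((∀ v ∈ U, sig v = false) ∧ sig u = false) then Real.exp (f sig) else 0 := by
    apply Finset.sum_nonneg; intro sig _; positivity
  rw [hA]
  calc (∑ sig : Fin p → Bool,
        if (∀ v ∈ U, sig v = false) then Real.exp (f sig) else 0)
      = _ + _ := hsplit
    _ ≤ (∑ sig : Fin p → Bool,
          if ((∀ v ∈ U, sig v = false) ∧ sig u = false) then Real.exp (f sig) else 0)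
        + Real.exp h * ∑ sig : Fin p → Bool,
          if ((∀ v ∈ U, sig v = false) ∧ sig u = false) then Real.exp (f sig) else 0 := by
        linarith
    _ = (1 + Real.exp h) * _ := by ring

/-- In the antiferromagnetic Ising model with fields bounded by `h`, for any set of nodes
`U` we have `P(σ_U = 0) ≥ (1 + e^h)^{-|U|}`. -/
theorem ising_all_zero_lower (p : ℕ) (G : SimpleGraph (Fin p)) [DecidableRel G.Adj]
    (beta h : ℝ) (hbeta : 0 < beta) (hv : Fin p → ℝ) (hh : ∀ i, |hv i| ≤ h)
    (U : Finset (Fin p)) :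
    (∑ sig : Fin p → Bool,
        if (∀ u ∈ U, sig u = false) then Real.exp (isingH G beta hv sig) else 0) /
      (∑ sig : Fin p → Bool, Real.exp (isingH G beta hv sig))
      ≥ ((1 + Real.exp h) ^ U.card)⁻¹ := by
  have hpos : (0:ℝ) < 1 + Real.exp h := by positivity
  have key : ∀ U : Finset (Fin p),
      (∑ sig : Fin p → Bool, Real.exp (isingH G beta hv sig))
        ≤ (1 + Real.exp h) ^ U.card * ∑ sig : Fin p → Bool,
            if (∀ u ∈ U, sig u = false) then Real.exp (isingH G beta hv sig) else 0 := by
    intro U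
    induction U using Finset.induction_on with
    | empty => simp
    | @insert u U hu ih =>
      calc (∑ sig : Fin p → Bool, Real.exp (isingH G beta hv sig))
          ≤ (1 + Real.exp h) ^ U.card * ∑ sig : Fin p → Bool,
              if (∀ v ∈ U, sig v = false) then Real.exp (isingH G beta hv sig) else 0 := ih
        _ ≤ (1 + Real.exp h) ^ U.card * ((1 + Real.exp h) * ∑ sig : Fin p → Bool,
              if (∀ v ∈ insert u U, sig v = false) then Real.exp (isingH G beta hv sig) else 0) :=
            mul_le_mul_of_nonneg_left (ising_step G beta h hbeta hv hh U u hu)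
              (pow_nonneg hpos.le _)
        _ = (1 + Real.exp h) ^ (insert u U).card * ∑ sig : Fin p → Bool,
              if (∀ v ∈ insert u U, sig v = false) then Real.exp (isingH G beta hv sig) else 0 := by
            rw [Finset.card_insert_of_notMem hu]; ring
  have hZ : (0:ℝ) < ∑ sig : Fin p → Bool, Real.exp (isingH G beta hv sig) :=
    Finset.sum_pos (fun sig _ => Real.exp_pos _) Finset.univ_nonempty
  have hc : (0:ℝ) < (1 + Real.exp h) ^ U.card := pow_pos hpos _
  rw [ge_iff_le, le_div_iff₀ hZ, inv_mul_le_iff₀ hc]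
  exact key U
end
end
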